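/- Let buckets B_l, …, B_0 contain disjoint finite samples X_l, …, X_0. For 0 < s < l, merging B_s,…,B_0 into one bucket and B_l,…,B_{s+1} into another and applying the two-bucket MMD formula yields exactly MMD_b²(⋃_{i=s+1}^l X_i, ⋃_{i=0}^s X_i), where MMD_b² is the biased estimate computed directly from all pairwise kernel evaluations; i.e., the incremental computation from stored sums XX_i and cross sums XY_i^j is exact. -/
import Mathlib

lemma pair_split (S : Finset ℕ) (f : ℕ → ℕ → ℝ) (hf : ∀ i ∈ S, ∀ j ∈ S, f i j = f j i) :
    ∑ i ∈ S, ∑ j ∈ S, f i j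
      = (∑ i ∈ S, f i i) + 2 * ∑ p ∈ (S ×ˢ S).filter (fun p => p.1 < p.2), f p.1 p.2 := by
  classical
  have h1 : ∑ i ∈ S, ∑ j ∈ S, f i j = ∑ p ∈ S ×ˢ S, f p.1 p.2 := by
    rw [Finset.sum_product]
  have hsplit : S ×ˢ S = ((S ×ˢ S).filter (fun p => p.1 = p.2)) ∪
      (((S ×ˢ S).filter (fun p => p.1 < p.2)) ∪ ((S ×ˢ S).filter (fun p => p.2 < p.1))) := by
    ext p
    simp only [Finset.mem_union, Finset.mem_filter]
    constructor
    · intro h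
      rcases lt_trichotomy p.1 p.2 with h' | h' | h' <;> tauto
    · tauto
  have hgt : ∑ p ∈ (S ×ˢ S).filter (fun p => p.2 < p.1), f p.1 p.2
      = ∑ p ∈ (S ×ˢ S).filter (fun p => p.1 < p.2), f p.1 p.2 := by
    apply Finset.sum_nbij' (fun p => (p.2, p.1)) (fun p => (p.2, p.1))
    · intro p hp; simp only [Finset.mem_filter, Finset.mem_product] at *; tauto
    · intro p hp; simp only [Finset.mem_filter, Finset.mem_product] at *; tauto
    · intro p _; rfl
    · intro p _; rfl
    · intro p hp
      simp only [Finset.mem_filter, Finset.mem_product] at hp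
      exact (hf p.2 hp.1.2 p.1 hp.1.1).symm
  have hdiag : ∑ p ∈ (S ×ˢ S).filter (fun p => p.1 = p.2), f p.1 p.2 = ∑ i ∈ S, f i i := by
    apply Finset.sum_nbij' (fun p => p.1) (fun i => (i, i))
    · intro p hp; simp only [Finset.mem_filter, Finset.mem_product] at *; tauto
    · intro i hi; simp only [Finset.mem_filter, Finset.mem_product]; tauto
    · intro p hp
      simp only [Finset.mem_filter, Finset.mem_product] at hp
      have : p = (p.1, p.1) := by
        ext
        · rfl
        · exact hp.2.symm
      exact this.symm
    · intro i _; rfl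
    · intro p hp
      simp only [Finset.mem_filter, Finset.mem_product] at hp
      rw [hp.2]
  have d1 : Disjoint ((S ×ˢ S).filter (fun p => p.1 < p.2))
      ((S ×ˢ S).filter (fun p => p.2 < p.1)) := by
    rw [Finset.disjoint_left]; intro p hp hq
    simp only [Finset.mem_filter] at hp hq; omega
  have d2 : Disjoint ((S ×ˢ S).filter (fun p => p.1 = p.2))
      (((S ×ˢ S).filter (fun p => p.1 < p.2)) ∪ ((S ×ˢ S).filter (fun p => p.2 < p.1))) := by
    rw [Finset.disjoint_left]; intro p hp hq
    simp only [Finset.mem_union, Finset.mem_filter] at hp hq; omega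
  rw [h1]
  conv_lhs => rw [hsplit]
  rw [Finset.sum_union d2, Finset.sum_union d1, hgt, hdiag]; ring



/-- For disjoint buckets `B_l, …, B_0` with samples `X_l, …, X_0`
and `0 < s < l`, merging `B_s,…,B_0` and `B_l,…,B_{s+1}` using the stored
self-sums `XX_i` and cross sums `XY_i^j` and applying the two-bucket MMD formula
yields exactly the biased estimate `MMD_b²(⋃_{i=s+1}^l X_i, ⋃_{i=0}^s X_i)`
computed directly from all pairwise kernel evaluations. -/
theorem stmt17 {α : Type*} [DecidableEq α] (k : α → α → ℝ)
    (hsymm : ∀ x y, k x y = k y x)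
    (l s : ℕ) (hs : 0 < s) (hsl : s < l)
    (Xb : ℕ → Finset α)
    (hdisj : ∀ i j, i ≤ l → j ≤ l → i ≠ j → Disjoint (Xb i) (Xb j))
    (XX : ℕ → ℝ) (XY : ℕ → ℕ → ℝ)
    (hXX : ∀ i, XX i = ∑ x ∈ Xb i, ∑ x' ∈ Xb i, k x x')
    (hXY : ∀ i j, XY i j = ∑ x ∈ Xb i, ∑ y ∈ Xb j, k x y)
    (A B : Finset α)
    (hA : A = (Finset.Icc (s + 1) l).biUnion Xb)
    (hB : B = (Finset.range (s + 1)).biUnion Xb) :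
    (1 / (A.card : ℝ) ^ 2) *
        ((∑ i ∈ Finset.Icc (s + 1) l, XX i) +
          2 * ∑ p ∈ (Finset.Icc (s + 1) l ×ˢ Finset.Icc (s + 1) l).filter
              (fun p => p.1 < p.2), XY p.1 p.2) +
      (1 / (B.card : ℝ) ^ 2) *
        ((∑ i ∈ Finset.range (s + 1), XX i) +
          2 * ∑ p ∈ (Finset.range (s + 1) ×ˢ Finset.range (s + 1)).filter
              (fun p => p.1 < p.2), XY p.1 p.2) -
      (2 / ((A.card : ℝ) * B.card)) *
        ∑ i ∈ Finset.Icc (s + 1) l, ∑ j ∈ Finset.range (s + 1), XY i j =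
    (1 / (A.card : ℝ) ^ 2) * (∑ x ∈ A, ∑ x' ∈ A, k x x') +
      (1 / (B.card : ℝ) ^ 2) * (∑ y ∈ B, ∑ y' ∈ B, k y y') -
      (2 / ((A.card : ℝ) * B.card)) * ∑ x ∈ A, ∑ y ∈ B, k x y := by

  classical
  set SA := Finset.Icc (s + 1) l with hSA
  set SB := Finset.range (s + 1) with hSB
  have hSAle : ∀ i ∈ SA, i ≤ l := fun i hi => (Finset.mem_Icc.mp hi).2
  have hSBle : ∀ i ∈ SB, i ≤ l := fun i hi => le_trans (Nat.lt_succ_iff.mp (Finset.mem_range.mp hi)) (le_of_lt hsl)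
  have pdA : (↑SA : Set ℕ).PairwiseDisjoint Xb := fun i hi j hj hij =>
    hdisj i j (hSAle i hi) (hSAle j hj) hij
  have pdB : (↑SB : Set ℕ).PairwiseDisjoint Xb := fun i hi j hj hij =>
    hdisj i j (hSBle i hi) (hSBle j hj) hij
  have symXY : ∀ i j, XY i j = XY j i := by
    intro i j
    rw [hXY, hXY, Finset.sum_comm]
    exact Finset.sum_congr rfl fun y _ => Finset.sum_congr rfl fun x _ => hsymm x y
  have hexp : ∀ (S T : Finset ℕ), (↑S : Set ℕ).PairwiseDisjoint Xb →
      (↑T : Set ℕ).PairwiseDisjoint Xb →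
      (∑ x ∈ S.biUnion Xb, ∑ y ∈ T.biUnion Xb, k x y) = ∑ i ∈ S, ∑ j ∈ T, XY i j := by
    intro S T hS hT
    rw [Finset.sum_biUnion hS]
    refine Finset.sum_congr rfl fun i _ => ?_
    rw [Finset.sum_comm]
    rw [Finset.sum_biUnion hT]
    refine Finset.sum_congr rfl fun j _ => ?_
    rw [hXY, Finset.sum_comm]
  have hAA : ∑ x ∈ A, ∑ x' ∈ A, k x x' = ∑ i ∈ SA, ∑ j ∈ SA, XY i j := by
    rw [hA]; exact hexp SA SA pdA pdA
  have hBB : ∑ y ∈ B, ∑ y' ∈ B, k y y' = ∑ i ∈ SB, ∑ j ∈ SB, XY i j := by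
    rw [hB]; exact hexp SB SB pdB pdB
  have hAB : ∑ x ∈ A, ∑ y ∈ B, k x y = ∑ i ∈ SA, ∑ j ∈ SB, XY i j := by
    rw [hA, hB]; exact hexp SA SB pdA pdB
  have hXXd : ∀ i, XX i = XY i i := by intro i; rw [hXX, hXY]
  rw [hAA, hBB, hAB, pair_split SA XY (fun i _ j _ => symXY i j),
      pair_split SB XY (fun i _ j _ => symXY i j)]
  simp only [hXXd]
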